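/- There exists a constant A = A(p, τ) > 0 such that for all ξ ∈ ℝ^n with |ξ| ≥ 1/2 and all j, k ∈ {0, ..., N}, the coefficients a_{jk} of the radial-basis representation L_{ξ,j}(t) = Σ_{k=0}^{N} a_{jk} φ̃_ξ(t − t_k) of the Lagrange functions (i.e. the entries of the inverse matrix M_ξ^{−1}, where M_ξ = (φ̃_ξ(t_j − t_k))_{j,k}) satisfy |a_{jk}| ≤ A. -/

import Mathlib

open MeasureTheory Finset

noncomputable section

/-- The coefficients `c_l = (2p-2-l)! 2^l / (l! (p-1-l)!)`. -/
def cCoef (p l : ℕ) : ℝ :=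
  ((2 * p - 2 - l).factorial : ℝ) * 2 ^ l / ((l.factorial : ℝ) * ((p - 1 - l).factorial : ℝ))

/-- The constant `γ_p = (p-1)! 2^{2p-1}`. -/
def gammaP (p : ℕ) : ℝ := ((p - 1).factorial : ℝ) * 2 ^ (2 * p - 1)

/-- The normalized kernel `φ̃_ξ(t) = e^{-|ξ||t|} Σ_{l=0}^{p-1} c_l |ξ|^l |t|^l` (with `c = |ξ|`). -/
def phiTilde (p : ℕ) (c : ℝ) (t : ℝ) : ℝ :=
  Real.exp (-(c * |t|)) * ∑ l ∈ Finset.range p, cCoef p l * c ^ l * |t| ^ l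

/-- The fundamental solution `φ_ξ(t) = ((-1)^p / (γ_p |ξ|^{2p-1})) φ̃_ξ(t)` of `L_ξ`. -/
def phiXi (p : ℕ) (c : ℝ) (t : ℝ) : ℂ :=
  (((-1 : ℝ) ^ p / (gammaP p * c ^ (2 * p - 1)) * phiTilde p c t : ℝ) : ℂ)

/-!
For `c > 0` the matrix `M_c` is positive definite. Up to the factor `(p-1)!/2^(2p-1)`, `φ̃₁` is
the autocorrelation `∫ K(x - t) K(x - s) dx` of the one-sided kernel `K(u) = u^(p-1) e^(-u)`
(`u > 0`), as one sees by expanding `(x + d)^(p-1)` and integrating Gamma functions. So the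
quadratic form of `M_c` at `x` is a positive multiple of `∫ (∑ⱼ xⱼ K(y - c τⱼ))² dy`, which is
positive for `x ≠ 0`: just right of the leftmost node with nonzero weight only one translate of
`K` is switched on.

Hence `c ↦ M_c⁻¹` is continuous on `[1/2, ∞)`. As `c → ∞` the off-diagonal entries
`e^(-c|t|) · poly(c|t|)` tend to `0`, so `M_c → c₀ I` and `M_c⁻¹` has a limit; a continuous map
on a closed half-line with a limit at infinity is bounded.
-/

open Filter Topology Set
open scoped Nat

lemma cCoef_pos (p l : ℕ) : 0 < cCoef p l := by
  unfold cCoef; positivity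

lemma factorial_div_two_pow_mul_cCoef {p l : ℕ} (hl : l < p) :
    ((p - 1)! : ℝ) / 2 ^ (2 * p - 1) * cCoef p l
      = (p - 1).choose l * (2 * p - 2 - l)! / 2 ^ (2 * p - 1 - l) := by
  have hchoose : ((p - 1).choose l * l ! * (p - 1 - l)! : ℝ) = (p - 1)! := by
    exact_mod_cast Nat.choose_mul_factorial_mul_factorial (by omega : l ≤ p - 1)
  have h2pow : (2 : ℝ) ^ (2 * p - 1) = 2 ^ (2 * p - 1 - l) * 2 ^ l := by
    rw [← pow_add]; congr 1; omega
  rw [cCoef, ← hchoose, h2pow]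
  field_simp

lemma phiTilde_neg (p : ℕ) (c t : ℝ) : phiTilde p c (-t) = phiTilde p c t := by
  simp only [phiTilde, abs_neg]

lemma phiTilde_zero {p : ℕ} (hp : 0 < p) (c : ℝ) : phiTilde p c 0 = cCoef p 0 := by
  simp only [phiTilde, abs_zero, mul_zero, neg_zero, Real.exp_zero, one_mul]
  rw [Finset.sum_eq_single_of_mem 0 (Finset.mem_range.2 hp) fun l _ hl => by simp [hl]]
  simp

lemma phiTilde_eq_phiTilde_one_mul (p : ℕ) {c : ℝ} (hc : 0 ≤ c) (t : ℝ) :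
    phiTilde p c t = phiTilde p 1 (c * t) := by
  simp only [phiTilde, abs_mul, abs_of_nonneg hc, one_mul, one_pow, mul_one, mul_pow, mul_assoc]

lemma tendsto_phiTilde_atTop (p : ℕ) {t : ℝ} (ht : t ≠ 0) :
    Tendsto (fun c => phiTilde p c t) atTop (𝓝 0) := by
  have hlin : Tendsto (fun c : ℝ => c * |t|) atTop atTop :=
    tendsto_id.atTop_mul_const (abs_pos.mpr ht)
  have hterm (l : ℕ) : Tendsto (fun c => cCoef p l * ((c * |t|) ^ l * Real.exp (-(c * |t|))))
      atTop (𝓝 0) := by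
    simpa using ((Real.tendsto_pow_mul_exp_neg_atTop_nhds_zero l).comp hlin).const_mul (cCoef p l)
  convert tendsto_finsetSum (Finset.range p) fun l _ => hterm l using 1
  · ext c; simp only [phiTilde, Finset.mul_sum, mul_pow]; congr! 1 with l; ring
  · simp

def oneSidedKernel (p : ℕ) : ℝ → ℝ := indicator (Ioi 0) fun u => u ^ (p - 1) * Real.exp (-u)

lemma oneSidedKernel_of_nonpos (p : ℕ) {u : ℝ} (hu : u ≤ 0) : oneSidedKernel p u = 0 :=
  indicator_of_notMem (not_lt.mpr hu) _

lemma oneSidedKernel_pos (p : ℕ) {u : ℝ} (hu : 0 < u) : 0 < oneSidedKernel p u := by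
  rw [oneSidedKernel, indicator_of_mem (Set.mem_Ioi.2 hu)]; positivity

lemma integrableOn_pow_mul_exp_neg_mul (k : ℕ) {r : ℝ} (hr : 0 < r) :
    IntegrableOn (fun x : ℝ => x ^ k * Real.exp (-(r * x))) (Ioi 0) := by
  refine (integrableOn_rpow_mul_exp_neg_mul_rpow (s := k) (by linarith [k.cast_nonneg (α := ℝ)])
    one_pos hr).congr_fun (fun x _ => ?_) measurableSet_Ioi
  simp [Real.rpow_natCast]

lemma integral_pow_mul_exp_neg_mul (k : ℕ) {r : ℝ} (hr : 0 < r) :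
    ∫ x in Ioi 0, x ^ k * Real.exp (-(r * x)) = k ! / r ^ (k + 1) := by
  have h := Real.integral_rpow_mul_exp_neg_mul_Ioi (a := k + 1) (by positivity) hr
  simp only [add_sub_cancel_right, Real.rpow_natCast] at h
  rw [h, Real.Gamma_nat_eq_factorial, ← Nat.cast_succ, Real.rpow_natCast, one_div, inv_pow,
    inv_mul_eq_div]

lemma memLp_two_oneSidedKernel (p : ℕ) : MemLp (oneSidedKernel p) 2 := by
  have hmeas : Measurable (oneSidedKernel p) :=
    (by fun_prop : Measurable _).indicator measurableSet_Ioi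
  refine (memLp_two_iff_integrable_sq hmeas.aestronglyMeasurable).2 ?_
  have hsq : (fun u => oneSidedKernel p u ^ 2)
      = indicator (Ioi 0) fun u => u ^ (2 * (p - 1)) * Real.exp (-(2 * u)) := by
    ext u
    by_cases hu : 0 < u
    · simp only [oneSidedKernel, indicator_of_mem (Set.mem_Ioi.2 hu)]
      rw [pow_mul', mul_pow, ← Real.exp_nat_mul]; push_cast; ring_nf
    · simp [oneSidedKernel, indicator_of_notMem (mt Set.mem_Ioi.1 hu)]
  rw [hsq, integrable_indicator_iff measurableSet_Ioi]
  exact integrableOn_pow_mul_exp_neg_mul _ two_pos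

lemma integrable_oneSidedKernel_sub_mul_sub (p : ℕ) (t s : ℝ) :
    Integrable fun x => oneSidedKernel p (x - t) * oneSidedKernel p (x - s) :=
  ((memLp_two_oneSidedKernel p).comp_measurePreserving (measurePreserving_sub_right volume t))
    |>.integrable_mul
  ((memLp_two_oneSidedKernel p).comp_measurePreserving (measurePreserving_sub_right volume s))

lemma oneSidedKernel_mul_add {p : ℕ} (hp : 0 < p) {d : ℝ} (hd : 0 ≤ d) (x : ℝ) :
    oneSidedKernel p x * oneSidedKernel p (x + d) = indicator (Ioi 0) (fun x =>
      ∑ m ∈ range p, (p - 1).choose m * d ^ (p - 1 - m) * Real.exp (-d) *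
        (x ^ (p - 1 + m) * Real.exp (-(2 * x)))) x := by
  by_cases hx : 0 < x
  · have hxd : 0 < x + d := by linarith
    simp only [oneSidedKernel, indicator_of_mem (Set.mem_Ioi.2 hx),
      indicator_of_mem (Set.mem_Ioi.2 hxd)]
    rw [add_pow, Nat.sub_add_cancel hp, Finset.sum_mul, Finset.mul_sum]
    refine Finset.sum_congr rfl fun m _ => ?_
    rw [pow_add, show -(2 * x) = -x + -x by ring, Real.exp_add, neg_add, Real.exp_add]
    ring
  · simp [oneSidedKernel_of_nonpos p (not_lt.mp hx), indicator_of_notMem (mt Set.mem_Ioi.1 hx)]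

lemma integral_oneSidedKernel_mul_add {p : ℕ} (hp : 0 < p) {d : ℝ} (hd : 0 ≤ d) :
    ∫ x, oneSidedKernel p x * oneSidedKernel p (x + d)
      = (p - 1)! / 2 ^ (2 * p - 1) * phiTilde p 1 d := by
  simp_rw [oneSidedKernel_mul_add hp hd]
  rw [integral_indicator measurableSet_Ioi, integral_finsetSum _ fun m _ =>
    (integrableOn_pow_mul_exp_neg_mul _ two_pos).const_mul _]
  simp_rw [integral_const_mul, integral_pow_mul_exp_neg_mul _ two_pos]
  rw [phiTilde, abs_of_nonneg hd, one_mul, Finset.mul_sum, Finset.mul_sum,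
    ← Finset.sum_range_reflect]
  refine Finset.sum_congr rfl fun l hl => ?_
  have hl := Finset.mem_range.1 hl
  rw [Nat.choose_symm (by omega), show p - 1 - (p - 1 - l) = l by omega,
    show p - 1 + (p - 1 - l) = 2 * p - 2 - l by omega,
    show 2 * p - 2 - l + 1 = 2 * p - 1 - l by omega, one_pow, mul_one]
  linear_combination -(Real.exp (-d) * d ^ l) * factorial_div_two_pow_mul_cCoef hl

lemma integral_oneSidedKernel_sub_mul_sub {p : ℕ} (hp : 0 < p) (t s : ℝ) :
    ∫ x, oneSidedKernel p (x - t) * oneSidedKernel p (x - s)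
      = (p - 1)! / 2 ^ (2 * p - 1) * phiTilde p 1 (t - s) := by
  wlog hst : s ≤ t generalizing t s
  · simp_rw [mul_comm (oneSidedKernel p (_ - t))]
    rw [this s t (le_of_not_ge hst), ← neg_sub, phiTilde_neg]
  rw [← integral_add_right_eq_self _ t]
  simp_rw [add_sub_cancel_right, add_sub_assoc]
  exact integral_oneSidedKernel_mul_add hp (sub_nonneg.2 hst)

lemma exists_Ioo_forall_sum_mul_oneSidedKernel_ne_zero {ι : Type*} [Fintype ι] (p : ℕ)
    {s : ι → ℝ} (hs : Function.Injective s) {x : ι → ℝ} (hx : x ≠ 0) :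
    ∃ a b, a < b ∧ ∀ y ∈ Set.Ioo a b, ∑ j, x j * oneSidedKernel p (y - s j) ≠ 0 := by
  classical
  obtain ⟨j₀, hj₀, hmin⟩ := (univ.filter (x · ≠ 0)).exists_min_image s
    (by simpa [Finset.Nonempty, funext_iff] using hx)
  have hj₀ : x j₀ ≠ 0 := (Finset.mem_filter.1 hj₀).2
  have hnear : ∀ᶠ y in 𝓝[>] s j₀, ∀ k, x k ≠ 0 → k ≠ j₀ → y < s k := by
    refine eventually_all.2 fun k => ?_
    by_cases hk : x k ≠ 0 ∧ k ≠ j₀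
    · have hlt : s j₀ < s k :=
        (hmin k (by simpa using hk.1)).lt_of_ne (hs.ne (Ne.symm hk.2))
      filter_upwards [nhdsWithin_le_nhds (eventually_lt_nhds hlt)] with y hy _ _ using hy
    · filter_upwards with y h1 h2 using absurd ⟨h1, h2⟩ hk
  obtain ⟨b, hb, hsub⟩ := mem_nhdsGT_iff_exists_Ioo_subset.1 hnear
  refine ⟨s j₀, b, hb, fun y hy => ?_⟩
  rw [Finset.sum_eq_single j₀ (fun k _ hkj => ?_) (by simp)]
  · exact mul_ne_zero hj₀ (oneSidedKernel_pos p (sub_pos.2 hy.1)).ne'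
  · by_cases hk : x k = 0
    · rw [hk, zero_mul]
    · rw [oneSidedKernel_of_nonpos p (sub_nonpos.2 (hsub hy k hk hkj).le), mul_zero]

lemma sum_sum_mul_phiTilde_pos {ι : Type*} [Fintype ι] {p : ℕ} (hp : 0 < p) {s : ι → ℝ}
    (hs : Function.Injective s) {x : ι → ℝ} (hx : x ≠ 0) :
    0 < ∑ j, ∑ k, x j * x k * phiTilde p 1 (s j - s k) := by
  set F : ℝ → ℝ := fun y => ∑ j, x j * oneSidedKernel p (y - s j)
  have hterm (j k : ι) : Integrable fun y =>
      x j * x k * (oneSidedKernel p (y - s j) * oneSidedKernel p (y - s k)) :=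
    (integrable_oneSidedKernel_sub_mul_sub p _ _).const_mul _
  have hFsq (y : ℝ) : F y ^ 2 = ∑ j, ∑ k,
      x j * x k * (oneSidedKernel p (y - s j) * oneSidedKernel p (y - s k)) := by
    rw [sq, Finset.sum_mul_sum]; congr! 2; ring
  have hint : Integrable fun y => F y ^ 2 := by
    simp_rw [hFsq]
    exact integrable_finsetSum _ fun j _ => integrable_finsetSum _ fun k _ => hterm j k
  have hF : ∫ y, F y ^ 2
      = (p - 1)! / 2 ^ (2 * p - 1) * ∑ j, ∑ k, x j * x k * phiTilde p 1 (s j - s k) := by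
    simp_rw [hFsq]
    rw [integral_finsetSum _ fun j _ => integrable_finsetSum _ fun k _ => hterm j k]
    simp_rw [integral_finsetSum _ fun k _ => hterm _ k, integral_const_mul,
      integral_oneSidedKernel_sub_mul_sub hp, Finset.mul_sum]
    congr! 2; ring
  have hFpos : 0 < ∫ y, F y ^ 2 := by
    obtain ⟨a, b, hab, hne⟩ := exists_Ioo_forall_sum_mul_oneSidedKernel_ne_zero p hs hx
    rw [integral_pos_iff_support_of_nonneg (fun y => sq_nonneg _) hint]
    calc (0 : ENNReal) < volume (Set.Ioo a b) := by simpa using hab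
      _ ≤ _ := measure_mono fun y hy => pow_ne_zero 2 (hne y hy)
  rw [hF] at hFpos
  exact pos_of_mul_pos_right hFpos (by positivity)

def kernelMatrix {ι : Type*} (p : ℕ) (τ : ι → ℝ) (c : ℝ) : Matrix ι ι ℝ :=
  Matrix.of fun j k => phiTilde p c (τ j - τ k)

section kernelMatrix

variable {ι : Type*} {p : ℕ} {τ : ι → ℝ}

lemma posDef_kernelMatrix [Fintype ι] (hp : 0 < p) (hτ : Function.Injective τ) {c : ℝ}
    (hc : 0 < c) : (kernelMatrix p τ c).PosDef := by
  refine .of_dotProduct_mulVec_pos ?_ fun x hx => ?_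
  · ext j k
    simp only [Matrix.conjTranspose_apply, kernelMatrix, Matrix.of_apply, star_trivial]
    rw [← neg_sub, phiTilde_neg]
  · have hquad : star x ⬝ᵥ (kernelMatrix p τ c).mulVec x
        = ∑ j, ∑ k, x j * x k * phiTilde p 1 (c * τ j - c * τ k) := by
      simp only [dotProduct, Matrix.mulVec, kernelMatrix, Matrix.of_apply, Pi.star_apply,
        star_trivial, Finset.mul_sum, ← mul_sub, phiTilde_eq_phiTilde_one_mul p hc.le]
      congr! 2; ring
    exact hquad ▸ sum_sum_mul_phiTilde_pos hp ((mul_right_injective₀ hc.ne').comp hτ) hx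

lemma continuous_kernelMatrix (p : ℕ) (τ : ι → ℝ) : Continuous (kernelMatrix p τ) :=
  continuous_matrix fun _ _ => by simp only [kernelMatrix, Matrix.of_apply, phiTilde]; fun_prop

lemma tendsto_kernelMatrix_atTop [DecidableEq ι] (hp : 0 < p) (hτ : Function.Injective τ) :
    Tendsto (kernelMatrix p τ) atTop (𝓝 (cCoef p 0 • 1)) := by
  refine tendsto_pi_nhds.2 fun j => tendsto_pi_nhds.2 fun k => ?_
  rcases eq_or_ne j k with rfl | hjk
  · simp [kernelMatrix, phiTilde_zero hp]
  · simpa [kernelMatrix, Matrix.one_apply_ne hjk] using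
      tendsto_phiTilde_atTop p (sub_ne_zero.2 (hτ.ne hjk))

end kernelMatrix

lemma isBounded_image_Ici_of_tendsto_atTop {α : Type*} [PseudoMetricSpace α] {f : ℝ → α}
    {a : ℝ} {L : α} (hf : ContinuousOn f (Ici a)) (hlim : Tendsto f atTop (𝓝 L)) :
    Bornology.IsBounded (f '' Ici a) := by
  obtain ⟨b, hb⟩ := eventually_atTop.1 (hlim (Metric.ball_mem_nhds L one_pos))
  have hcpt : IsCompact (f '' Icc a b) :=
    isCompact_Icc.image_of_continuousOn (hf.mono Icc_subset_Ici_self)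
  refine (hcpt.isBounded.union (Metric.isBounded_ball (x := L) (r := 1))).subset ?_
  rintro _ ⟨c, hc, rfl⟩
  rcases le_total c b with h | h
  · exact .inl ⟨c, ⟨hc, h⟩, rfl⟩
  · exact .inr (hb c h)

lemma exists_abs_inv_kernelMatrix_le {ι : Type*} [Fintype ι] [DecidableEq ι] {p : ℕ}
    (hp : 0 < p) {τ : ι → ℝ} (hτ : Function.Injective τ) {a : ℝ} (ha : 0 < a) :
    ∃ A > (0 : ℝ), ∀ c, a ≤ c → ∀ j k, |(kernelMatrix p τ c)⁻¹ j k| ≤ A := by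
  have hinv {M : Matrix ι ι ℝ} (hM : M.det ≠ 0) : ContinuousAt Inv.inv M :=
    continuousAt_matrix_inv M (Ring.inverse_eq_inv' (G₀ := ℝ) ▸ continuousAt_inv₀ hM)
  have hcont : ContinuousOn (fun c => (kernelMatrix p τ c)⁻¹) (Ici a) := fun c hc =>
    ((hinv (posDef_kernelMatrix hp hτ (ha.trans_le hc)).det_pos.ne').comp
      (continuous_kernelMatrix p τ).continuousAt).continuousWithinAt
  have hlim : Tendsto (fun c => (kernelMatrix p τ c)⁻¹) atTop (𝓝 (cCoef p 0 • 1)⁻¹) :=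
    (hinv (by simp [(cCoef_pos p 0).ne'])).tendsto.comp (tendsto_kernelMatrix_atTop hp hτ)
  -- `Matrix` carries no global norm, so bound the inverses in the sup norm of `ι → ι → ℝ`.
  obtain ⟨C, hC⟩ := isBounded_iff_forall_norm_le.1
    (isBounded_image_Ici_of_tendsto_atTop (α := ι → ι → ℝ) hcont hlim)
  refine ⟨max C 1, by positivity, fun c hc j k => ?_⟩
  rw [← Real.norm_eq_abs]
  exact ((norm_le_pi_norm _ k).trans ((norm_le_pi_norm _ j).trans (hC _ ⟨c, hc, rfl⟩))).trans
    (le_max_left _ _)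

theorem rbf_coefficients_uniformly_bounded_general
    (n p N : ℕ) (hp : 2 ≤ p)
    (τ : Fin (N + 1) → ℝ) (hτ : StrictMono τ) :
    ∃ A > (0 : ℝ), ∀ ξ : EuclideanSpace ℝ (Fin n), (1 / 2 : ℝ) ≤ ‖ξ‖ →
      ∀ j k : Fin (N + 1),
        |(Matrix.of fun j k => phiTilde p ‖ξ‖ (τ j - τ k))⁻¹ j k| ≤ A := by
  obtain ⟨A, hA, hbound⟩ :=
    exists_abs_inv_kernelMatrix_le (p := p) (by omega) hτ.injective one_half_pos
  exact ⟨A, hA, fun ξ hξ => hbound ‖ξ‖ hξ⟩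

/-- **Lemma (Uniform bound on the RBF coefficients).** There is a constant
`A = A(p, τ) > 0` such that for all `ξ ∈ ℝⁿ` with `|ξ| ≥ 1/2` and all
`j, k ∈ {0, ..., N}`, the coefficients `a_{jk}` of the radial-basis representation of the
Lagrange functions, i.e. the entries of the inverse of the matrix
`M_ξ = (φ̃_ξ(τ j - τ k))_{j,k}`, satisfy `|a_{jk}| ≤ A`. -/
theorem rbf_coefficients_uniformly_bounded
    (n p N : ℕ) (hp : 2 ≤ p) (hN : p ≤ N + 1)
    (τ : Fin (N + 1) → ℝ) (hτ : StrictMono τ) :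
    ∃ A > (0 : ℝ), ∀ ξ : EuclideanSpace ℝ (Fin n), (1 / 2 : ℝ) ≤ ‖ξ‖ →
      ∀ j k : Fin (N + 1),
        |(Matrix.of fun j k => phiTilde p ‖ξ‖ (τ j - τ k))⁻¹ j k| ≤ A :=
  rbf_coefficients_uniformly_bounded_general n p N hp τ hτ
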